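/- Under Assumption A, for every probability measure μ on Θ with finite second moment, G(μ)² ≤ 2β (R² + 1) S₀² · L(μ) · (1 + m₂(μ)). -/

import Mathlib

/-! The one-dimensional input is that a nonnegative `L̃` with `β`-Lipschitz derivative satisfies
`L̃'(r)² ≤ 2β L̃(r)`: by the descent lemma, `0 ≤ L̃(r - L̃'(r)/β) ≤ L̃(r) - L̃'(r)²/(2β)`.
With `‖v_k(θ)‖² ≤ S₀²(R² + 1)(1 + ‖θ‖²)` and Cauchy–Schwarz for the average over `k`, the
integrand of `G(μ)²` is at most `2β(R² + 1)S₀² L(μ)(1 + ‖θ‖²)`; integrate against `μ`. -/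

open MeasureTheory Set Filter
open scoped ENNReal

noncomputable section

/-- The parameter space `Θ := ℝ × ℝ^d × ℝ` of a one-hidden-layer network,
with coordinates `θ = (w, a, b)`. -/
abbrev Theta (d : ℕ) : Type := ℝ × EuclideanSpace ℝ (Fin d) × ℝ

/-- Second moment `m₂(μ) = ∫ ‖θ‖² dμ(θ)`. -/
def m2 {d : ℕ} (μ : Measure (Theta d)) : ℝ := ∫ θ : Theta d, ‖θ‖ ^ 2 ∂μ

/-- `μ` is a probability measure with finite second moment. -/
def MemP2 {d : ℕ} (μ : Measure (Theta d)) : Prop :=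
  IsProbabilityMeasure μ ∧ Integrable (fun θ : Theta d => ‖θ‖ ^ 2) μ

/-- Mean-field network output `f_μ(x) = ∫ w σ(a·x + b) dμ(w,a,b)`. -/
def netOut {d : ℕ} (σ : ℝ → ℝ) (μ : Measure (Theta d))
    (x : EuclideanSpace ℝ (Fin d)) : ℝ :=
  ∫ θ : Theta d, θ.1 * σ ((inner ℝ θ.2.1 x : ℝ) + θ.2.2) ∂μ

/-- Empirical loss `L(μ) = (1/M) Σ_k L̃(f_μ(x_k) − y_k)`. -/
def lossL {d M : ℕ} (σ Ltil : ℝ → ℝ) (x : Fin M → EuclideanSpace ℝ (Fin d))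
    (y : Fin M → ℝ) (μ : Measure (Theta d)) : ℝ :=
  (1 / (M : ℝ)) * ∑ k : Fin M, Ltil (netOut σ μ (x k) - y k)

/-- The feature gradient vector
`v_k(w,a,b) = (σ(a·x_k+b), w σ'(a·x_k+b) x_k, w σ'(a·x_k+b)) ∈ Θ`. -/
def vfeat {d : ℕ} (σ σ' : ℝ → ℝ) (x : EuclideanSpace ℝ (Fin d)) (θ : Theta d) : Theta d :=
  (σ ((inner ℝ θ.2.1 x : ℝ) + θ.2.2),
   (θ.1 * σ' ((inner ℝ θ.2.1 x : ℝ) + θ.2.2)) • x,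
   θ.1 * σ' ((inner ℝ θ.2.1 x : ℝ) + θ.2.2))

/-- The squared slope functional
`G(μ)² = ∫ ‖(1/M) Σ_k L̃'(f_μ(x_k) − y_k) v_k(θ)‖² dμ(θ)`. -/
def slopeSq {d M : ℕ} (σ σ' Ltil' : ℝ → ℝ) (x : Fin M → EuclideanSpace ℝ (Fin d))
    (y : Fin M → ℝ) (μ : Measure (Theta d)) : ℝ :=
  ∫ θ : Theta d,
    ‖(1 / (M : ℝ)) •
        ∑ k : Fin M, Ltil' (netOut σ μ (x k) - y k) • vfeat σ σ' (x k) θ‖ ^ 2 ∂μ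

/-- The slope functional `G(μ) = √(G(μ)²) ≥ 0`. -/
def slopeG {d M : ℕ} (σ σ' Ltil' : ℝ → ℝ) (x : Fin M → EuclideanSpace ℝ (Fin d))
    (y : Fin M → ℝ) (μ : Measure (Theta d)) : ℝ :=
  Real.sqrt (slopeSq σ σ' Ltil' x y μ)

/-- Squared Wasserstein-2 distance, as the infimum over couplings of the (possibly infinite)
integral `∫ ‖p.1 − p.2‖² dπ`. -/
def W2sq {d : ℕ} (μ ν : Measure (Theta d)) : ℝ≥0∞ :=
  ⨅ (π : Measure (Theta d × Theta d))
    (_ : π.map Prod.fst = μ ∧ π.map Prod.snd = ν),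
      ∫⁻ p, ENNReal.ofReal (‖p.1 - p.2‖ ^ 2) ∂π

/-- Wasserstein-2 distance. -/
def W2 {d : ℕ} (μ ν : Measure (Theta d)) : ℝ := Real.sqrt (W2sq μ ν).toReal

theorem le_add_deriv_mul_add_sq {f f' : ℝ → ℝ} {β : ℝ} (hf : ∀ t, HasDerivAt f (f' t) t)
    (hlip : ∀ r s, |f' r - f' s| ≤ β * |r - s|) (a b : ℝ) :
    f b ≤ f a + f' a * (b - a) + β / 2 * (b - a) ^ 2 := by
  set g : ℝ → ℝ := fun t => f t - f' a * (t - a) - β / 2 * (t - a) ^ 2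
  have hg : ∀ t, HasDerivAt g (f' t - f' a - β * (t - a)) t := fun t => by
    refine (((hf t).sub (((hasDerivAt_id t).sub_const a).const_mul (f' a))).sub
      ((((hasDerivAt_id t).sub_const a).pow 2).const_mul (β / 2))).congr_deriv ?_
    simp only [id, Nat.cast_ofNat]
    ring
  have hg_cont : Continuous g := continuous_iff_continuousAt.2 fun t => (hg t).continuousAt
  suffices g b ≤ g a by simp only [g] at this; linarith
  rcases le_total a b with hab | hba
  · refine antitoneOn_of_hasDerivWithinAt_nonpos (convex_Ici a) hg_cont.continuousOn
      (fun t _ => (hg t).hasDerivWithinAt) (fun t ht => ?_) self_mem_Ici hab hab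
    rw [interior_Ici, mem_Ioi] at ht
    have := (le_abs_self _).trans (hlip t a)
    rw [abs_of_pos (sub_pos.2 ht)] at this
    linarith
  · refine monotoneOn_of_hasDerivWithinAt_nonneg (convex_Iic a) hg_cont.continuousOn
      (fun t _ => (hg t).hasDerivWithinAt) (fun t ht => ?_) hba self_mem_Iic hba
    rw [interior_Iic, mem_Iio] at ht
    have := (neg_abs_le _).trans' (neg_le_neg (hlip t a))
    rw [abs_of_neg (sub_neg.2 ht)] at this
    linarith

theorem sq_deriv_le_two_mul_mul_of_nonneg {f f' : ℝ → ℝ} {β : ℝ} (hβ : 0 < β)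
    (hf : ∀ t, HasDerivAt f (f' t) t) (hlip : ∀ r s, |f' r - f' s| ≤ β * |r - s|)
    (hf_nonneg : ∀ t, 0 ≤ f t) (r : ℝ) :
    f' r ^ 2 ≤ 2 * β * f r := by
  have hstep := le_add_deriv_mul_add_sq hf hlip r (r - f' r / β)
  have hval : f' r * (r - f' r / β - r) + β / 2 * (r - f' r / β - r) ^ 2
      = -(f' r ^ 2 / (2 * β)) := by
    field_simp
    ring
  have : f' r ^ 2 / (2 * β) ≤ f r := by linarith [hf_nonneg (r - f' r / β)]
  rwa [div_le_iff₀ (by positivity), mul_comm] at this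

theorem norm_smul_sum_sq_le {ι E : Type*} [Fintype ι] [SeminormedAddCommGroup E]
    [NormedSpace ℝ E] (u : ι → E) :
    ‖(1 / (Fintype.card ι : ℝ)) • ∑ i, u i‖ ^ 2 ≤ (1 / Fintype.card ι) * ∑ i, ‖u i‖ ^ 2 := by
  set n : ℝ := (Fintype.card ι : ℝ)
  calc ‖(1 / n) • ∑ i, u i‖ ^ 2 = (1 / n) ^ 2 * ‖∑ i, u i‖ ^ 2 := by
        rw [norm_smul, mul_pow, Real.norm_of_nonneg (by positivity)]
    _ ≤ (1 / n) ^ 2 * (∑ i, ‖u i‖) ^ 2 := by gcongr; exact norm_sum_le _ _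
    _ ≤ (1 / n) ^ 2 * (n * ∑ i, ‖u i‖ ^ 2) := by
        gcongr; exact sq_sum_le_card_mul_sum_sq
    _ = (1 / n) * ∑ i, ‖u i‖ ^ 2 := by
        rcases eq_or_ne n 0 with hn | hn
        · simp [hn]
        · field_simp

theorem norm_vfeat_sq_le {d : ℕ} {σ σ' : ℝ → ℝ} {S₀ R : ℝ} (hσ : ∀ z, |σ z| ≤ S₀)
    (hσ' : ∀ z, |σ' z| ≤ S₀) {x : EuclideanSpace ℝ (Fin d)} (hx : ‖x‖ ≤ R) (θ : Theta d) :
    ‖vfeat σ σ' x θ‖ ^ 2 ≤ S₀ ^ 2 * (R ^ 2 + 1) * (1 + ‖θ‖ ^ 2) := by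
  set z := (inner ℝ θ.2.1 x : ℝ) + θ.2.2
  set B := S₀ ^ 2 * (R ^ 2 + 1) * (1 + ‖θ‖ ^ 2)
  have hS₀ : 0 ≤ S₀ := (abs_nonneg _).trans (hσ 0)
  have hwσ' : |θ.1 * σ' z| ≤ ‖θ‖ * S₀ := by
    rw [abs_mul]; exact mul_le_mul (norm_fst_le θ) (hσ' z) (abs_nonneg _) (norm_nonneg _)
  have hB : B = S₀ ^ 2 + (‖θ‖ * S₀) ^ 2 + (‖θ‖ * S₀ * R) ^ 2 + (S₀ * R) ^ 2 := by ring
  have h₁ : |σ z| ≤ √B := (hσ z).trans <| Real.le_sqrt_of_sq_le <| by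
    rw [hB]; linarith [sq_nonneg (‖θ‖ * S₀), sq_nonneg (‖θ‖ * S₀ * R), sq_nonneg (S₀ * R)]
  have h₂ : ‖(θ.1 * σ' z) • x‖ ≤ √B := by
    rw [norm_smul, Real.norm_eq_abs]
    refine (mul_le_mul hwσ' hx (norm_nonneg _) (by positivity)).trans <|
      Real.le_sqrt_of_sq_le ?_
    rw [hB]; linarith [sq_nonneg S₀, sq_nonneg (‖θ‖ * S₀), sq_nonneg (S₀ * R)]
  have h₃ : |θ.1 * σ' z| ≤ √B := hwσ'.trans <| Real.le_sqrt_of_sq_le <| by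
    rw [hB]; linarith [sq_nonneg S₀, sq_nonneg (‖θ‖ * S₀ * R), sq_nonneg (S₀ * R)]
  have hv : ‖vfeat σ σ' x θ‖ ≤ √B :=
    norm_prod_le_iff.2 ⟨h₁, norm_prod_le_iff.2 ⟨h₂, h₃⟩⟩
  calc ‖vfeat σ σ' x θ‖ ^ 2 ≤ √B ^ 2 := by gcongr
    _ = B := Real.sq_sqrt (by positivity)

theorem integral_le_mul_one_add_m2 {d : ℕ} {μ : Measure (Theta d)} [IsProbabilityMeasure μ]
    (hμ2 : Integrable (fun θ : Theta d => ‖θ‖ ^ 2) μ) {f : Theta d → ℝ} {K : ℝ}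
    (hf_nonneg : ∀ θ, 0 ≤ f θ) (hf_le : ∀ θ, f θ ≤ K * (1 + ‖θ‖ ^ 2)) :
    ∫ θ, f θ ∂μ ≤ K * (1 + m2 μ) := by
  calc ∫ θ, f θ ∂μ ≤ ∫ θ, K * (1 + ‖θ‖ ^ 2) ∂μ :=
        integral_mono_of_nonneg (.of_forall hf_nonneg)
          (((integrable_const 1).add hμ2).const_mul K) (.of_forall hf_le)
    _ = K * (1 + m2 μ) := by
        rw [integral_const_mul, integral_add (integrable_const 1) hμ2, m2]
        simp

theorem norm_slope_integrand_sq_le {d M : ℕ} {σ σ' Ltil Ltil' : ℝ → ℝ} {S₀ β R : ℝ}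
    {x : Fin M → EuclideanSpace ℝ (Fin d)} (y : Fin M → ℝ) (μ : Measure (Theta d))
    (hσbd : ∀ z, |σ z| ≤ S₀) (hσ'bd : ∀ z, |σ' z| ≤ S₀) (hR : ∀ k, ‖x k‖ ≤ R)
    (hLsq : ∀ r, Ltil' r ^ 2 ≤ 2 * β * Ltil r) (θ : Theta d) :
    ‖(1 / (M : ℝ)) • ∑ k, Ltil' (netOut σ μ (x k) - y k) • vfeat σ σ' (x k) θ‖ ^ 2 ≤
      2 * β * (R ^ 2 + 1) * S₀ ^ 2 * lossL σ Ltil x y μ * (1 + ‖θ‖ ^ 2) := by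
  set e : Fin M → ℝ := fun k => netOut σ μ (x k) - y k
  set B := S₀ ^ 2 * (R ^ 2 + 1) * (1 + ‖θ‖ ^ 2)
  calc ‖(1 / (M : ℝ)) • ∑ k, Ltil' (e k) • vfeat σ σ' (x k) θ‖ ^ 2
      ≤ (1 / M) * ∑ k, ‖Ltil' (e k) • vfeat σ σ' (x k) θ‖ ^ 2 := by
        simpa using norm_smul_sum_sq_le fun k => Ltil' (e k) • vfeat σ σ' (x k) θ
    _ ≤ (1 / M) * ∑ k, 2 * β * Ltil (e k) * B := by
        gcongr with k
        rw [norm_smul, mul_pow, Real.norm_eq_abs, sq_abs]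
        exact mul_le_mul (hLsq _) (norm_vfeat_sq_le hσbd hσ'bd (hR k) θ) (sq_nonneg _)
          ((sq_nonneg _).trans (hLsq _))
    _ = 2 * β * (R ^ 2 + 1) * S₀ ^ 2 * lossL σ Ltil x y μ * (1 + ‖θ‖ ^ 2) := by
        rw [lossL, ← Finset.sum_mul, ← Finset.mul_sum]
        ring

theorem slopeSq_growth_bound_general
    {d M : ℕ}
    (σ σ' Ltil Ltil' : ℝ → ℝ) (S₀ β R : ℝ) (hβ : 0 < β)
    (x : Fin M → EuclideanSpace ℝ (Fin d)) (y : Fin M → ℝ)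
    (hσbd : ∀ z : ℝ, |σ z| ≤ S₀) (hσ'bd : ∀ z : ℝ, |σ' z| ≤ S₀)
    (hR : ∀ k : Fin M, ‖x k‖ ≤ R)
    (hLnonneg : ∀ r : ℝ, 0 ≤ Ltil r)
    (hLderiv : ∀ r : ℝ, HasDerivAt Ltil (Ltil' r) r)
    (hLlip : ∀ r s : ℝ, |Ltil' r - Ltil' s| ≤ β * |r - s|)
    (μ : Measure (Theta d)) (hμ : IsProbabilityMeasure μ)
    (hμ2 : Integrable (fun θ : Theta d => ‖θ‖ ^ 2) μ) :
    slopeSq σ σ' Ltil' x y μ ≤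
      2 * β * (R ^ 2 + 1) * S₀ ^ 2 * lossL σ Ltil x y μ * (1 + m2 μ) :=
  integral_le_mul_one_add_m2 hμ2 (fun _ => sq_nonneg _) <|
    norm_slope_integrand_sq_le y μ hσbd hσ'bd hR
      (sq_deriv_le_two_mul_mul_of_nonneg hβ hLderiv hLlip hLnonneg)

/-- (Growth bound for the slope, Lemma 4.2, first part.) Under Assumption A
(`σ` continuously differentiable with `|σ| ≤ S₀`, `|σ'| ≤ S₀`; `‖x_k‖ ≤ R`; `L̃ ≥ 0`
continuously differentiable with `β`-Lipschitz derivative and infimum `0`), for every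
probability measure `μ` on `Θ` with finite second moment,
`G(μ)² ≤ 2β(R² + 1)S₀² · L(μ) · (1 + m₂(μ))`. -/
theorem slopeSq_growth_bound
    {d M : ℕ} (hM : 1 ≤ M)
    (σ σ' Ltil Ltil' : ℝ → ℝ) (S₀ β R : ℝ) (hβ : 0 < β)
    (x : Fin M → EuclideanSpace ℝ (Fin d)) (y : Fin M → ℝ)
    (hσderiv : ∀ z : ℝ, HasDerivAt σ (σ' z) z)
    (hσ'cont : Continuous σ')
    (hσbd : ∀ z : ℝ, |σ z| ≤ S₀) (hσ'bd : ∀ z : ℝ, |σ' z| ≤ S₀)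
    (hR : ∀ k : Fin M, ‖x k‖ ≤ R)
    (hLnonneg : ∀ r : ℝ, 0 ≤ Ltil r)
    (hLderiv : ∀ r : ℝ, HasDerivAt Ltil (Ltil' r) r)
    (hL'cont : Continuous Ltil')
    (hLlip : ∀ r s : ℝ, |Ltil' r - Ltil' s| ≤ β * |r - s|)
    (hLinf : ∀ ε : ℝ, 0 < ε → ∃ r : ℝ, Ltil r < ε)
    (μ : Measure (Theta d)) (hμ : IsProbabilityMeasure μ)
    (hμ2 : Integrable (fun θ : Theta d => ‖θ‖ ^ 2) μ) :
    slopeSq σ σ' Ltil' x y μ ≤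
      2 * β * (R ^ 2 + 1) * S₀ ^ 2 * lossL σ Ltil x y μ * (1 + m2 μ) :=
  slopeSq_growth_bound_general σ σ' Ltil Ltil' S₀ β R hβ x y hσbd hσ'bd hR hLnonneg hLderiv hLlip μ
    hμ hμ2
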